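/- arXiv:2211.17053 — 2 statements merged into one kernel-verified Lean document; each statement's English description precedes it below -/
import Mathlib

section
/- For a random variable ζ on a finite probability space and γ ∈ (0,1), suppose t⋆ < 0 attains the infimum in AVaR_γ(ζ) = min_t ( t + (1/γ)E[max(ζ−t,0)] ) and AVaR_γ(ζ) ≤ 0. Setting c⋆ = −1/t⋆ > 0, one has E[max(1 + c⋆ ζ, 0)] ≤ γ. -/
open Finset in
/-- Change of variables for AVaR: if `t⋆ < 0` attains the minimum in the AVaR
formula and `AVaR_γ(ζ) ≤ 0`, then with `c⋆ = -1/t⋆` one has `E[max(1 + c⋆ ζ, 0)] ≤ γ`. -/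
theorem stmt_4 {W : Type*} [Fintype W] (p : W → ℝ) (ζ : W → ℝ) (γ : ℝ) (tstar : ℝ)
    (hp : ∀ w, 0 ≤ p w) (hsum : ∑ w, p w = 1) (hγ : γ ∈ Set.Ioo (0:ℝ) 1)
    (htneg : tstar < 0)
    (hmin : ∀ t : ℝ, tstar + γ⁻¹ * ∑ w, p w * max (ζ w - tstar) 0
        ≤ t + γ⁻¹ * ∑ w, p w * max (ζ w - t) 0)
    (havar : tstar + γ⁻¹ * ∑ w, p w * max (ζ w - tstar) 0 ≤ 0) :
    ∑ w, p w * max (1 + (-1 / tstar) * ζ w) 0 ≤ γ := by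
  obtain ⟨hγ0, hγ1⟩ := hγ
  have hnt : (0:ℝ) < -tstar := by linarith
  have key : ∀ w, max (1 + (-1 / tstar) * ζ w) 0 = (-tstar)⁻¹ * max (ζ w - tstar) 0 := by
    intro w
    rw [mul_max_of_nonneg _ _ (le_of_lt (inv_pos.mpr hnt)), mul_zero]
    congr 1
    have h : tstar ≠ 0 := ne_of_lt htneg
    field_simp
    ring
  simp_rw [key]
  have hS0 : 0 ≤ ∑ w, p w * max (ζ w - tstar) 0 := by
    apply Finset.sum_nonneg
    intro w _
    exact mul_nonneg (hp w) (le_max_right _ _)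
  set S := ∑ w, p w * max (ζ w - tstar) 0 with hS
  have h1 : γ⁻¹ * S ≤ -tstar := by linarith
  have h2 : S ≤ γ * (-tstar) := by
    have := mul_le_mul_of_nonneg_left h1 (le_of_lt hγ0)
    rw [← mul_assoc, mul_inv_cancel₀ (ne_of_gt hγ0), one_mul] at this
    exact this
  calc ∑ w, p w * ((-tstar)⁻¹ * max (ζ w - tstar) 0)
      = (-tstar)⁻¹ * S := by rw [hS, Finset.mul_sum]; congr 1; ext w; ring
    _ ≤ γ := by
        rw [inv_mul_le_iff₀ hnt]
        linarith [h2]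
end

section
/- Let a rectangle of length l and width w (centered at position p ∈ ℝ², oriented at heading ψ) be given, and let n ≥ 1 circles of radius r = (1/2)·√((l/n)² + w²) be centered at c_j = p + (l/(2n))(2j − n − 1)(cos ψ, sin ψ) for j = 1,…,n. Then the union of the n closed discs of radius r covers the rectangle. -/
/-- The `n` circles of radius `r = (1/2)√((l/n)² + w²)` with centers
`c_j = p + (l/(2n))(2j - n - 1)(cos ψ, sin ψ)`, `j = 1,…,n`, cover the rectangle of
length `l` and width `w` centered at `p` with heading `ψ`. -/
theorem stmt_10 (l w : ℝ) (hl : 0 < l) (hw : 0 < w) (n : ℕ) (hn : 1 ≤ n)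
    (p : ℝ × ℝ) (ψ : ℝ) (r : ℝ) (hr : r = (1/2) * Real.sqrt ((l / n) ^ 2 + w ^ 2)) :
    ∀ u v : ℝ, |u| ≤ l / 2 → |v| ≤ w / 2 →
      ∃ j : Fin n,
        (p.1 + u * Real.cos ψ - v * Real.sin ψ
            - (p.1 + l / (2 * n) * (2 * ((j : ℝ) + 1) - n - 1) * Real.cos ψ)) ^ 2
        + (p.2 + u * Real.sin ψ + v * Real.cos ψ
            - (p.2 + l / (2 * n) * (2 * ((j : ℝ) + 1) - n - 1) * Real.sin ψ)) ^ 2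
        ≤ r ^ 2 := by
  intro u v hu hv
  have hn0 : (0:ℝ) < n := by exact_mod_cast Nat.lt_of_lt_of_le Nat.zero_lt_one hn
  obtain ⟨hu1, hu2⟩ := abs_le.mp hu
  obtain ⟨hv1, hv2⟩ := abs_le.mp hv
  set t : ℝ := u + l / 2 with ht
  have ht0 : 0 ≤ t := by simp only [ht]; linarith
  have htl : t ≤ l := by simp only [ht]; linarith
  set j0 : ℕ := min (Nat.floor (t * n / l)) (n - 1) with hj0
  have hj0n : j0 < n := lt_of_le_of_lt (min_le_right _ _) (Nat.sub_lt (by omega) one_pos)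
  refine ⟨⟨j0, hj0n⟩, ?_⟩
  have hln : 0 < l / n := div_pos hl hn0
  have hlow : (j0 : ℝ) * (l / n) ≤ t := by
    have h1 : (j0:ℝ) ≤ t * n / l := by
      have h2 : (j0:ℝ) ≤ (Nat.floor (t * n / l) : ℝ) := by exact_mod_cast min_le_left _ _
      exact h2.trans (Nat.floor_le (by positivity))
    have h3 := mul_le_mul_of_nonneg_right h1 hln.le
    have h4 : t * n / l * (l / n) = t := by field_simp
    linarith [h4 ▸ h3]
  have hup : t ≤ ((j0:ℝ) + 1) * (l / n) := by
    rcases le_or_gt (Nat.floor (t * n / l)) (n - 1) with h | h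
    · have hje : j0 = Nat.floor (t * n / l) := min_eq_left h
      have h2 : t * n / l < (j0:ℝ) + 1 := by
        rw [hje]; exact Nat.lt_floor_add_one _
      have h3 := mul_le_mul_of_nonneg_right h2.le hln.le
      have h4 : t * n / l * (l / n) = t := by field_simp
      linarith [h4 ▸ h3]
    · have hje : j0 = n - 1 := min_eq_right h.le
      have h5 : ((j0:ℝ) + 1) = n := by
        rw [hje]; push_cast [Nat.cast_sub hn]; ring
      rw [h5]
      have : (n:ℝ) * (l / n) = l := by field_simp
      linarith
  set a : ℝ := l / (2 * n) * (2 * ((j0:ℝ) + 1) - n - 1) with ha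
  have hkey : (p.1 + u * Real.cos ψ - v * Real.sin ψ - (p.1 + a * Real.cos ψ)) ^ 2
      + (p.2 + u * Real.sin ψ + v * Real.cos ψ - (p.2 + a * Real.sin ψ)) ^ 2
      = (u - a) ^ 2 + v ^ 2 := by
    have hsc := Real.sin_sq_add_cos_sq ψ
    linear_combination ((u - a) ^ 2 + v ^ 2) * hsc
  rw [hkey]
  have hr2 : r ^ 2 = (1/4) * ((l / n) ^ 2 + w ^ 2) := by
    rw [hr, mul_pow, Real.sq_sqrt (by positivity)]; ring
  have hamid : a = ((j0:ℝ) + 1/2) * (l / n) - l / 2 := by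
    rw [ha]; field_simp; ring
  have hua : (u - a) ^ 2 ≤ (l / (2 * n)) ^ 2 := by
    have hrep : u - a = t - ((j0:ℝ) + 1/2) * (l / n) := by rw [hamid, ht]; ring
    have hb1 : -(l / (2 * n)) ≤ u - a := by
      rw [hrep]
      have : ((j0:ℝ) + 1/2) * (l / n) - l / (2 * n) = (j0:ℝ) * (l / n) := by
        field_simp; ring
      linarith [hlow, this]
    have hb2 : u - a ≤ l / (2 * n) := by
      rw [hrep]
      have : ((j0:ℝ) + 1/2) * (l / n) + l / (2 * n) = ((j0:ℝ) + 1) * (l / n) := by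
        field_simp; ring
      linarith [hup, this]
    exact sq_le_sq' hb1 hb2
  have hv2 : v ^ 2 ≤ (w / 2) ^ 2 := sq_le_sq' (by linarith) (by linarith)
  have heq : (l / (2 * n)) ^ 2 + (w / 2) ^ 2 = (1/4) * ((l / n) ^ 2 + w ^ 2) := by
    field_simp; ring
  rw [hr2]
  linarith
end
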